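/- Let A = {A₀,…,A_{m−1}} ⊂ M_d(R) with joint spectral radius 1. Let B₀ ∈ M_{md}(R) be the block cyclic permutation matrix (shifting the m blocks of size d cyclically, with identity blocks) and B₁ := diag(A₀, A₁, …, A_{m−1}) ∈ M_{md}(R). Then for every n ≥ 1, max over products P of n elements of {B₀,B₁} of ‖P‖ satisfies max_{0 ≤ k ≤ ⌊n/(m+1)⌋} max over products Q of k elements of A of ‖Q‖ ≤ max_P ‖P‖ ≤ max_{0 ≤ k ≤ n} max over products Q of k elements of A of ‖Q‖, where the empty product is the identity. -/

import Mathlib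

open Filter Topology

/-- The operator norm induced by the Euclidean norms. -/
noncomputable def eOpNorm {m n : Type*} [Fintype m] [Fintype n] [DecidableEq n]
    (A : Matrix m n ℝ) : ℝ :=
  ‖LinearMap.toContinuousLinearMap (Matrix.toEuclideanLin A)‖

/-- The maximal Euclidean operator norm over all products of `n` elements of `𝒜`. -/
noncomputable def mirS {m : Type*} [Fintype m] [DecidableEq m]
    (𝒜 : Set (Matrix m m ℝ)) (n : ℕ) : ℝ :=
  sSup { x | ∃ l : List (Matrix m m ℝ), l.length = n ∧ (∀ M ∈ l, M ∈ 𝒜) ∧ x = eOpNorm l.prod }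

/-- The maximal Euclidean operator norm over all products of `n` matrices from a family. -/
noncomputable def mirF {ι : Type*} {m : Type*} [Fintype m] [DecidableEq m]
    (f : ι → Matrix m m ℝ) (n : ℕ) : ℝ :=
  sSup { x | ∃ l : List ι, l.length = n ∧ x = eOpNorm (l.map f).prod }

/-- The block cyclic permutation matrix: the `(i, j)` block (of size `d × d`) is the
identity iff `i = j + 1 (mod m)`, else `0`. -/
def B0 (m d : ℕ) [NeZero m] : Matrix (Fin m × Fin d) (Fin m × Fin d) ℝ :=
  fun p q => if p.1 = q.1 + 1 ∧ p.2 = q.2 then 1 else 0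

/-- The block diagonal matrix `diag (A 0, …, A (m-1))`. -/
def B1 {m d : ℕ} (A : Fin m → Matrix (Fin d) (Fin d) ℝ) :
    Matrix (Fin m × Fin d) (Fin m × Fin d) ℝ :=
  fun p q => if p.1 = q.1 then A p.1 p.2 q.2 else 0

/-! Products of `B0` and `B1` are block permutation matrices whose nonzero blocks are products
of at most `n` of the `A i`, and the norm of a block permutation matrix is the largest norm of its
blocks: this is the upper bound. Conversely `B0 ^ (m - ℓ) * B1 * B0 ^ ℓ = diag (A (i + ℓ))ᵢ`, so a
product of `k` of the `A i` is the `0`-th diagonal block of a product of `k (m + 1)` factors `B0`,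
`B1`, which a power of `B0` pads to any length `n ≥ k (m + 1)` without changing the block norms. -/

open Matrix

section BlockPerm

variable {ι κ α : Type*} [DecidableEq ι]

def blockPerm [Zero α] (σ : Equiv.Perm ι) (C : ι → Matrix κ κ α) :
    Matrix (ι × κ) (ι × κ) α :=
  fun p q => if p.1 = σ q.1 then C q.1 p.2 q.2 else 0

variable [Semiring α]

@[simp]
lemma blockPerm_one_one [DecidableEq κ] :
    blockPerm (1 : Equiv.Perm ι) (fun _ => (1 : Matrix κ κ α)) = 1 := by
  ext p q
  by_cases h : p.1 = q.1 <;> simp [blockPerm, one_apply, Prod.ext_iff, h]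

variable [Fintype ι] [Fintype κ]

lemma blockPerm_mul_blockPerm (σ τ : Equiv.Perm ι) (C D : ι → Matrix κ κ α) :
    blockPerm σ C * blockPerm τ D = blockPerm (σ * τ) (fun j => C (τ j) * D j) := by
  ext p q
  rw [mul_apply, Fintype.sum_prod_type, Finset.sum_eq_single (τ q.1)]
  · by_cases h : p.1 = σ (τ q.1) <;> simp [blockPerm, h, mul_apply]
  · intro i _ hi
    simp [blockPerm, hi]
  · simp

lemma list_prod_map_blockPerm_one [DecidableEq κ] {β : Type*} (l : List β)
    (C : β → ι → Matrix κ κ α) :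
    (l.map fun b => blockPerm 1 (C b)).prod =
      blockPerm 1 (fun i => (l.map fun b => C b i).prod) := by
  induction l with
  | nil => simp
  | cons b l ih => simp [ih, blockPerm_mul_blockPerm]

lemma blockPerm_mulVec_apply (σ : Equiv.Perm ι) (C : ι → Matrix κ κ α) (v : ι × κ → α)
    (j : ι) (a : κ) :
    (blockPerm σ C *ᵥ v) (σ j, a) = (C j *ᵥ fun b => v (j, b)) a := by
  simp only [mulVec, dotProduct, Fintype.sum_prod_type]
  rw [Finset.sum_eq_single j]
  · simp [blockPerm]
  · intro i _ hi
    simp [blockPerm, Ne.symm hi]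
  · simp

end BlockPerm

section EuclideanBlocks

variable {ι κ : Type*} [Fintype ι] [Fintype κ]

def vecBlock (x : EuclideanSpace ℝ (ι × κ)) (i : ι) : EuclideanSpace ℝ κ :=
  WithLp.toLp 2 fun b => x (i, b)

lemma norm_sq_eq_sum_norm_sq_vecBlock (x : EuclideanSpace ℝ (ι × κ)) :
    ‖x‖ ^ 2 = ∑ i, ‖vecBlock x i‖ ^ 2 := by
  simp only [EuclideanSpace.norm_sq_eq, Fintype.sum_prod_type]
  rfl

lemma norm_vecBlock_le (x : EuclideanSpace ℝ (ι × κ)) (i : ι) : ‖vecBlock x i‖ ≤ ‖x‖ := by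
  refine (pow_le_pow_iff_left₀ (norm_nonneg _) (norm_nonneg _) two_ne_zero).mp ?_
  rw [norm_sq_eq_sum_norm_sq_vecBlock]
  exact Finset.single_le_sum (f := fun i => ‖vecBlock x i‖ ^ 2) (fun _ _ => by positivity)
    (Finset.mem_univ i)

variable [DecidableEq ι] [DecidableEq κ]

lemma vecBlock_toEuclideanLin_blockPerm (σ : Equiv.Perm ι) (C : ι → Matrix κ κ ℝ)
    (x : EuclideanSpace ℝ (ι × κ)) (j : ι) :
    vecBlock (toEuclideanLin (blockPerm σ C) x) (σ j) = toEuclideanLin (C j) (vecBlock x j) := by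
  ext a
  exact blockPerm_mulVec_apply σ C x.ofLp j a

lemma eOpNorm_blockPerm_le (σ : Equiv.Perm ι) (C : ι → Matrix κ κ ℝ) {B : ℝ} (hB : 0 ≤ B)
    (hC : ∀ j, eOpNorm (C j) ≤ B) : eOpNorm (blockPerm σ C) ≤ B := by
  refine ContinuousLinearMap.opNorm_le_bound _ hB fun x => ?_
  refine (pow_le_pow_iff_left₀ (norm_nonneg _) (by positivity) two_ne_zero).mp ?_
  calc ‖toEuclideanLin (blockPerm σ C) x‖ ^ 2
      = ∑ j, ‖toEuclideanLin (C j) (vecBlock x j)‖ ^ 2 := by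
        rw [norm_sq_eq_sum_norm_sq_vecBlock, ← Equiv.sum_comp σ]
        simp only [vecBlock_toEuclideanLin_blockPerm]
    _ ≤ ∑ j, (B * ‖vecBlock x j‖) ^ 2 := by
        gcongr with j
        exact (ContinuousLinearMap.le_opNorm _ _).trans
          (mul_le_mul_of_nonneg_right (hC j) (norm_nonneg _))
    _ = (B * ‖x‖) ^ 2 := by
        simp only [mul_pow, ← Finset.mul_sum, ← norm_sq_eq_sum_norm_sq_vecBlock]

lemma eOpNorm_le_eOpNorm_blockPerm (σ : Equiv.Perm ι) (C : ι → Matrix κ κ ℝ) (j : ι) :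
    eOpNorm (C j) ≤ eOpNorm (blockPerm σ C) := by
  refine ContinuousLinearMap.opNorm_le_bound _ (norm_nonneg _) fun v => ?_
  let x : EuclideanSpace ℝ (ι × κ) := WithLp.toLp 2 fun p => if p.1 = j then v p.2 else 0
  have hx : ∀ i, vecBlock x i = if i = j then v else 0 := by
    intro i
    ext b
    by_cases h : i = j <;> simp [x, vecBlock, h]
  have hxv : ‖x‖ = ‖v‖ := by
    refine (pow_left_inj₀ (norm_nonneg _) (norm_nonneg _) two_ne_zero).mp ?_
    simp [norm_sq_eq_sum_norm_sq_vecBlock, hx, apply_ite]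
  calc ‖toEuclideanLin (C j) v‖
      = ‖vecBlock (toEuclideanLin (blockPerm σ C) x) (σ j)‖ := by
        rw [vecBlock_toEuclideanLin_blockPerm, hx, if_pos rfl]
    _ ≤ ‖toEuclideanLin (blockPerm σ C) x‖ := norm_vecBlock_le _ _
    _ ≤ eOpNorm (blockPerm σ C) * ‖v‖ := by
        rw [← hxv]
        exact (LinearMap.toContinuousLinearMap (toEuclideanLin (blockPerm σ C))).le_opNorm x

end EuclideanBlocks

section ProductNorms

variable {ι n : Type*} [Fintype n] [DecidableEq n]

lemma eOpNorm_nonneg (M : Matrix n n ℝ) : 0 ≤ eOpNorm M := norm_nonneg _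

lemma eOpNorm_one_le : eOpNorm (1 : Matrix n n ℝ) ≤ 1 := by
  rw [eOpNorm, show toEuclideanLin (1 : Matrix n n ℝ) = LinearMap.id from toLpLin_one 2]
  exact ContinuousLinearMap.norm_id_le

lemma eOpNorm_list_prod_le {C : ℝ} (hC : 0 ≤ C) (l : List (Matrix n n ℝ))
    (hl : ∀ M ∈ l, eOpNorm M ≤ C) : eOpNorm l.prod ≤ C ^ l.length := by
  induction l with
  | nil => simpa using eOpNorm_one_le
  | cons M l ih =>
    simp only [List.forall_mem_cons] at hl
    calc eOpNorm (M * l.prod) ≤ eOpNorm M * eOpNorm l.prod := l2_opNorm_mul M l.prod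
      _ ≤ C * C ^ l.length := by
        gcongr
        exacts [eOpNorm_nonneg _, hl.1, ih hl.2]
      _ = C ^ (M :: l).length := (pow_succ' C _).symm

lemma bddAbove_eOpNorm_list_prod_map [Finite ι] (f : ι → Matrix n n ℝ) (k : ℕ) :
    BddAbove {x | ∃ l : List ι, l.length = k ∧ x = eOpNorm (l.map f).prod} := by
  obtain ⟨C, hC⟩ := Finite.bddAbove_range fun i => eOpNorm (f i)
  refine ⟨max C 0 ^ k, ?_⟩
  rintro x ⟨l, rfl, rfl⟩
  simpa using eOpNorm_list_prod_le (le_max_right C 0) (l.map f) <| by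
    simpa using fun i _ => le_max_of_le_left (hC ⟨i, rfl⟩)

lemma eOpNorm_le_mirF [Finite ι] (f : ι → Matrix n n ℝ) (l : List ι) :
    eOpNorm (l.map f).prod ≤ mirF f l.length :=
  le_csSup (bddAbove_eOpNorm_list_prod_map f _) ⟨l, rfl, rfl⟩

lemma mirF_le [Nonempty ι] {f : ι → Matrix n n ℝ} {k : ℕ} {c : ℝ}
    (h : ∀ l : List ι, l.length = k → eOpNorm (l.map f).prod ≤ c) : mirF f k ≤ c :=
  csSup_le ⟨_, List.replicate k (Classical.arbitrary ι), List.length_replicate, rfl⟩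
    (by rintro x ⟨l, hl, rfl⟩; exact h l hl)

lemma mirS_eq_mirF (𝒜 : Set (Matrix n n ℝ)) (k : ℕ) :
    mirS 𝒜 k = mirF (Subtype.val : 𝒜 → Matrix n n ℝ) k := by
  unfold mirS mirF
  congr 1
  ext x
  constructor
  · rintro ⟨l, rfl, hl, rfl⟩
    lift l to List 𝒜 using hl
    exact ⟨l, by simp, rfl⟩
  · rintro ⟨l, rfl, rfl⟩
    refine ⟨l.map Subtype.val, by simp, ?_, rfl⟩
    simp only [List.mem_map]
    rintro _ ⟨M, -, rfl⟩
    exact M.2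

lemma le_mirS {𝒜 : Set (Matrix n n ℝ)} (h𝒜 : 𝒜.Finite) {l : List (Matrix n n ℝ)}
    (hl : ∀ M ∈ l, M ∈ 𝒜) : eOpNorm l.prod ≤ mirS 𝒜 l.length := by
  have := h𝒜.to_subtype
  lift l to List 𝒜 using hl
  simpa [mirS_eq_mirF] using eOpNorm_le_mirF Subtype.val l

lemma mirS_le {𝒜 : Set (Matrix n n ℝ)} (h𝒜 : 𝒜.Nonempty) {k : ℕ} {c : ℝ}
    (h : ∀ l : List (Matrix n n ℝ), l.length = k → (∀ M ∈ l, M ∈ 𝒜) → eOpNorm l.prod ≤ c) :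
    mirS 𝒜 k ≤ c := by
  have := h𝒜.to_subtype
  rw [mirS_eq_mirF]
  refine mirF_le fun l hl => h _ (by simpa) ?_
  simp only [List.mem_map]
  rintro _ ⟨M, -, rfl⟩
  exact M.2

end ProductNorms

section BlockProducts

variable {ι κ α : Type*} [DecidableEq ι] [Fintype κ] [DecidableEq κ]

def IsBlockProduct [Semiring α] (A : ι → Matrix κ κ α) (n : ℕ)
    (M : Matrix (ι × κ) (ι × κ) α) : Prop :=
  ∃ σ : Equiv.Perm ι, ∃ w : ι → List ι,
    (∀ j, (w j).length ≤ n) ∧ M = blockPerm σ fun j => ((w j).map A).prod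

namespace IsBlockProduct

variable [Semiring α] {A : ι → Matrix κ κ α}

lemma one : IsBlockProduct A 0 1 :=
  ⟨1, fun _ => [], by simp, by simp⟩

variable [Fintype ι]

lemma mul {a b : ℕ} {M N : Matrix (ι × κ) (ι × κ) α} (hM : IsBlockProduct A a M)
    (hN : IsBlockProduct A b N) : IsBlockProduct A (a + b) (M * N) := by
  obtain ⟨σ, v, hv, rfl⟩ := hM
  obtain ⟨τ, w, hw, rfl⟩ := hN
  refine ⟨σ * τ, fun j => v (τ j) ++ w j, fun j => by simpa using add_le_add (hv _) (hw j), ?_⟩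
  simp [blockPerm_mul_blockPerm]

lemma list_prod {l : List (Matrix (ι × κ) (ι × κ) α)} (hl : ∀ M ∈ l, IsBlockProduct A 1 M) :
    IsBlockProduct A l.length l.prod := by
  induction l with
  | nil => exact one
  | cons M l ih =>
    simp only [List.forall_mem_cons] at hl
    simpa [add_comm] using hl.1.mul (ih hl.2)

end IsBlockProduct

variable [Fintype ι]

lemma eOpNorm_le_sup_mirF_of_isBlockProduct {A : ι → Matrix κ κ ℝ} {n : ℕ}
    {M : Matrix (ι × κ) (ι × κ) ℝ} (hM : IsBlockProduct A n M) :
    eOpNorm M ≤ (Finset.range (n + 1)).sup' Finset.nonempty_range_add_one (mirF A) := by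
  obtain ⟨σ, w, hw, rfl⟩ := hM
  have hle : ∀ k ≤ n,
      mirF A k ≤ (Finset.range (n + 1)).sup' Finset.nonempty_range_add_one (mirF A) :=
    fun k hk => Finset.le_sup' (mirF A) (Finset.mem_range_succ_iff.mpr hk)
  refine eOpNorm_blockPerm_le σ _ ?_ fun j => (eOpNorm_le_mirF A (w j)).trans (hle _ (hw j))
  exact (eOpNorm_nonneg _).trans <| (eOpNorm_le_mirF A []).trans (hle 0 n.zero_le)

end BlockProducts

section CyclicBlocks

open Fin.CommRing Fin.NatCast

variable {m d : ℕ} (A : Fin m → Matrix (Fin d) (Fin d) ℝ)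

lemma B1_eq_blockPerm : B1 A = blockPerm 1 A := by
  ext p q
  by_cases h : p.1 = q.1 <;> simp [B1, blockPerm, h]

lemma isBlockProduct_B1 : IsBlockProduct A 1 (B1 A) :=
  ⟨1, fun j => [j], by simp, by simp [B1_eq_blockPerm]⟩

variable [NeZero m]

lemma B0_eq_blockPerm : B0 m d = blockPerm (Equiv.addRight 1) fun _ => 1 := by
  ext p q
  by_cases h : p.1 = q.1 + 1 <;> simp [B0, blockPerm, one_apply, h]

lemma isBlockProduct_B0 : IsBlockProduct A 1 (B0 m d) :=
  ⟨Equiv.addRight 1, fun _ => [], by simp, by simp [B0_eq_blockPerm]⟩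

lemma B0_pow (t : ℕ) : B0 m d ^ t = blockPerm (Equiv.addRight (t : Fin m)) fun _ => 1 := by
  induction t with
  | zero =>
    rw [pow_zero, Nat.cast_zero, Equiv.addRight_zero]
    exact blockPerm_one_one.symm
  | succ t ih =>
    rw [pow_succ, ih, B0_eq_blockPerm, blockPerm_mul_blockPerm]
    congr 1
    · ext x
      simp [add_assoc, add_comm (1 : Fin m)]
    · simp

lemma B0_pow_mul_B1_mul_B0_pow (ℓ : Fin m) :
    B0 m d ^ (m - ℓ : ℕ) * B1 A * B0 m d ^ (ℓ : ℕ) = blockPerm 1 fun i => A (i + ℓ) := by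
  rw [B0_pow, B0_pow, B1_eq_blockPerm, blockPerm_mul_blockPerm, blockPerm_mul_blockPerm]
  congr 1
  · ext x
    simp [add_assoc]
  · simp

def diagWord (ℓ : Fin m) : List (Matrix (Fin m × Fin d) (Fin m × Fin d) ℝ) :=
  List.replicate (m - ℓ) (B0 m d) ++ B1 A :: List.replicate ℓ (B0 m d)

lemma length_diagWord (ℓ : Fin m) : (diagWord A ℓ).length = m + 1 := by
  simp [diagWord]
  omega

lemma mem_diagWord {ℓ : Fin m} {M : Matrix (Fin m × Fin d) (Fin m × Fin d) ℝ}
    (hM : M ∈ diagWord A ℓ) : M ∈ ({B0 m d, B1 A} : Set _) := by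
  simp only [diagWord, List.mem_append, List.mem_cons, List.mem_replicate] at hM
  rcases hM with ⟨-, rfl⟩ | rfl | ⟨-, rfl⟩
  exacts [Set.mem_insert _ _, Set.mem_insert_of_mem _ rfl, Set.mem_insert _ _]

lemma prod_diagWord (ℓ : Fin m) : (diagWord A ℓ).prod = blockPerm 1 fun i => A (i + ℓ) := by
  rw [← B0_pow_mul_B1_mul_B0_pow, diagWord, List.prod_append, List.prod_cons,
    List.prod_replicate, List.prod_replicate, mul_assoc]

lemma mirF_le_mirS_of_mul_le {k n : ℕ} (hk : k * (m + 1) ≤ n) :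
    mirF A k ≤ mirS {B0 m d, B1 A} n := by
  refine mirF_le fun l hl => ?_
  let W := List.replicate (n - k * (m + 1)) (B0 m d) ++ l.flatMap (diagWord A)
  have hW : ∀ M ∈ W, M ∈ ({B0 m d, B1 A} : Set _) := by
    simp only [W, List.mem_append, List.mem_replicate, List.mem_flatMap]
    rintro M (⟨-, rfl⟩ | ⟨ℓ, -, hM⟩)
    exacts [Set.mem_insert _ _, mem_diagWord A hM]
  have hWlen : W.length = n := by
    simp [W, List.length_flatMap, length_diagWord, hl]
    omega
  have hWprod : W.prod = blockPerm (Equiv.addRight ((n - k * (m + 1) : ℕ) : Fin m))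
      fun i => (l.map fun ℓ => A (i + ℓ)).prod := by
    simp only [W, List.prod_append, List.prod_replicate, List.flatMap_def, List.prod_flatten,
      List.map_map, Function.comp_def, prod_diagWord, list_prod_map_blockPerm_one, B0_pow,
      blockPerm_mul_blockPerm]
    simp
  calc eOpNorm (l.map A).prod
      ≤ eOpNorm W.prod := by
        simpa [hWprod] using
          eOpNorm_le_eOpNorm_blockPerm _ (fun i => (l.map fun ℓ => A (i + ℓ)).prod) 0
    _ ≤ mirS {B0 m d, B1 A} n := hWlen ▸ le_mirS (Set.toFinite _) hW

lemma mirS_le_sup_mirF (n : ℕ) :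
    mirS {B0 m d, B1 A} n ≤
      (Finset.range (n + 1)).sup' Finset.nonempty_range_add_one (mirF A) := by
  refine mirS_le (Set.insert_nonempty _ _) fun l hl hmem => ?_
  refine hl ▸ eOpNorm_le_sup_mirF_of_isBlockProduct (IsBlockProduct.list_prod fun M hM => ?_)
  rcases hmem M hM with rfl | rfl
  exacts [isBlockProduct_B0 A, isBlockProduct_B1 A]

end CyclicBlocks

theorem stmt11_general {d m : ℕ} [NeZero m] (A : Fin m → Matrix (Fin d) (Fin d) ℝ) :
    ∀ n : ℕ, 1 ≤ n →
      (∀ k : ℕ, k ≤ n / (m + 1) → mirF A k ≤ mirS {B0 m d, B1 A} n) ∧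
      (∃ k : ℕ, k ≤ n ∧ mirS {B0 m d, B1 A} n ≤ mirF A k) := by
  intro n _
  refine ⟨fun k hk => mirF_le_mirS_of_mul_le A ((Nat.le_div_iff_mul_le m.succ_pos).mp hk), ?_⟩
  obtain ⟨k, hk, hsup⟩ := Finset.exists_mem_eq_sup' Finset.nonempty_range_add_one (mirF A)
  exact ⟨k, Finset.mem_range_succ_iff.mp hk, hsup ▸ mirS_le_sup_mirF A n⟩

theorem stmt11 {d m : ℕ} [NeZero m] (A : Fin m → Matrix (Fin d) (Fin d) ℝ)
    (hjsr : Tendsto (fun n : ℕ => mirF A n ^ ((n : ℝ)⁻¹)) atTop (𝓝 1)) :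
    ∀ n : ℕ, 1 ≤ n →
      (∀ k : ℕ, k ≤ n / (m + 1) → mirF A k ≤ mirS {B0 m d, B1 A} n) ∧
      (∃ k : ℕ, k ≤ n ∧ mirS {B0 m d, B1 A} n ≤ mirF A k) :=
  stmt11_general A
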